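/- arXiv:2203.00096 — 2 statements merged into one kernel-verified Lean document; each statement's English description precedes it below -/
import Mathlib

section
/- (Doeblin's theorem) Let (S_t)_{t≥0} be a Markov (stochastic, mass- and positivity-preserving) semigroup on finite measures on Ω. If there exist α ∈ (0,1), a probability measure η, and a time τ > 0 such that S_τ μ ≥ α η for all probability measures μ, then S_t has a unique invariant probability measure μ_∞, and for any probability measure μ and all t ≥ 0, ‖S_t μ − μ_∞‖_TV ≤ C e^{−λ t} ‖μ − μ_∞‖_TV with C = 1/(1−α) and λ = −log(1−α)/τ. -/
/-!
Doeblin's condition makes `S τ` a strict contraction in total variation: split `μ - ν` into its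
Jordan parts `p` and `q`, of equal mass `c`; both `S τ p` and `S τ q` dominate `α c η`, and this
common part cancels, leaving mass `(1 - α) c`. A fixed point of `S τ` is built explicitly as
`∑ₙ α (1 - α)ⁿ Rⁿ η` with `R μ = (S τ μ - α η) / (1 - α)`, a probability measure again, so no
completeness of the space of measures is needed. Being unique, it is invariant under every `S t`,
and writing `t = n τ + s` with `n = ⌊t / τ⌋` gives the rate `(1 - α)ⁿ ≤ (1 - α)⁻¹ e^{-λ t}`.
-/

open MeasureTheory Real
open scoped ENNReal

noncomputable def tvDist {Ω : Type*} [MeasurableSpace Ω] (μ ν : Measure Ω) : ℝ :=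
  ⨆ E : {E : Set Ω // MeasurableSet E}, |(μ E.1).toReal - (ν E.1).toReal|

section TotalVariation

variable {Ω : Type*} [MeasurableSpace Ω] {μ ν p q : Measure Ω}

theorem abs_sub_le_tvDist [IsFiniteMeasure μ] [IsFiniteMeasure ν] {E : Set Ω}
    (hE : MeasurableSet E) : |μ.real E - ν.real E| ≤ tvDist μ ν := by
  refine le_ciSup (f := fun E : {E : Set Ω // MeasurableSet E} => |μ.real E - ν.real E|)
    ⟨μ.real .univ + ν.real .univ, ?_⟩ ⟨E, hE⟩
  rintro _ ⟨E, rfl⟩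
  have := measureReal_mono (μ := μ) E.1.subset_univ
  have := measureReal_mono (μ := ν) E.1.subset_univ
  rw [abs_sub_le_iff]
  constructor <;> linarith [measureReal_nonneg (μ := μ) (s := E.1),
    measureReal_nonneg (μ := ν) (s := E.1)]

theorem tvDist_nonneg (μ ν : Measure Ω) [IsFiniteMeasure μ] [IsFiniteMeasure ν] :
    0 ≤ tvDist μ ν :=
  (abs_nonneg _).trans (abs_sub_le_tvDist .empty)

theorem eq_of_tvDist_eq_zero [IsFiniteMeasure μ] [IsFiniteMeasure ν] (h : tvDist μ ν = 0) :
    μ = ν := by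
  ext E hE
  have := abs_sub_le_tvDist (μ := μ) (ν := ν) hE
  rw [h, abs_nonpos_iff, sub_eq_zero, measureReal_def, measureReal_def] at this
  exact (ENNReal.toReal_eq_toReal_iff' (measure_ne_top _ _) (measure_ne_top _ _)).mp this

theorem MeasureTheory.Measure.real_sub_real_eq_of_add_eq_add [IsFiniteMeasure μ] [IsFiniteMeasure ν]
    [IsFiniteMeasure p] [IsFiniteMeasure q] (h : μ + q = ν + p) (E : Set Ω) :
    μ.real E - ν.real E = p.real E - q.real E := by
  have := congrArg (fun m : Measure Ω => m.real E) h
  rw [measureReal_add_apply, measureReal_add_apply] at this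
  linarith

theorem tvDist_le_of_add_eq_add [IsProbabilityMeasure μ] [IsProbabilityMeasure ν]
    [IsFiniteMeasure p] [IsFiniteMeasure q] (h : μ + q = ν + p) :
    tvDist μ ν ≤ p.real .univ := by
  have hmass : q.real .univ = p.real .univ := by
    linarith [Measure.real_sub_real_eq_of_add_eq_add h .univ, probReal_univ (μ := μ),
      probReal_univ (μ := ν)]
  refine ciSup_le fun E => ?_
  rw [← measureReal_def, ← measureReal_def, Measure.real_sub_real_eq_of_add_eq_add h]
  exact abs_sub_le_of_nonneg_of_le measureReal_nonneg (measureReal_mono E.1.subset_univ)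
    measureReal_nonneg (hmass ▸ measureReal_mono E.1.subset_univ)

theorem MeasureTheory.Measure.add_sub_eq_add_sub_swap (μ ν : Measure Ω) [IsFiniteMeasure μ]
    [IsFiniteMeasure ν] : μ + (ν - μ) = ν + (μ - ν) := by
  have h := Measure.sub_toSignedMeasure_eq_toSignedMeasure_sub (μ := μ) (ν := ν)
  rw [sub_eq_sub_iff_add_eq_add, ← Measure.toSignedMeasure_add,
    ← Measure.toSignedMeasure_add, Measure.toSignedMeasure_eq_toSignedMeasure_iff] at h
  rw [h, add_comm]

theorem MeasureTheory.Measure.sub_apply_univ_comm (μ ν : Measure Ω) [IsProbabilityMeasure μ]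
    [IsProbabilityMeasure ν] : (ν - μ) .univ = (μ - ν) .univ := by
  have h := congrArg (fun m : Measure Ω => m .univ) (Measure.add_sub_eq_add_sub_swap μ ν)
  simp only [Measure.add_apply, measure_univ] at h
  exact (ENNReal.add_right_inj ENNReal.one_ne_top).mp h

theorem tvDist_eq_measureReal_sub [IsProbabilityMeasure μ] [IsProbabilityMeasure ν] :
    tvDist μ ν = (μ - ν).real .univ := by
  refine (tvDist_le_of_add_eq_add (Measure.add_sub_eq_add_sub_swap μ ν)).antisymm ?_
  obtain ⟨A, hA, hμν, hνμ⟩ := Measure.mutually_singular_measure_sub (μ := μ) (ν := ν)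
  have h := Measure.real_sub_real_eq_of_add_eq_add (Measure.add_sub_eq_add_sub_swap μ ν) Aᶜ
  have hsplit := measureReal_add_measureReal_compl (μ := μ - ν) hA
  rw [measureReal_def (s := Aᶜ) (μ := ν - μ), hνμ, ENNReal.toReal_zero, sub_zero] at h
  rw [measureReal_def (s := A), hμν, ENNReal.toReal_zero, zero_add] at hsplit
  rw [← hsplit, ← h]
  exact (le_abs_self _).trans (abs_sub_le_tvDist hA.compl)

end TotalVariation

def LinearMap.ofMapSMulAdd {R M N : Type*} [Semiring R] [AddCommMonoid M] [AddCommMonoid N]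
    [Module R M] [Module R N] (f : M → N)
    (hf : ∀ (a b : R) (x y : M), f (a • x + b • y) = a • f x + b • f y) : M →ₗ[R] N where
  toFun := f
  map_add' x y := by simpa using hf 1 1 x y
  map_smul' a x := by simpa using hf a 0 x x

@[simp]
theorem LinearMap.coe_ofMapSMulAdd {R M N : Type*} [Semiring R] [AddCommMonoid M]
    [AddCommMonoid N] [Module R M] [Module R N] (f : M → N)
    (hf : ∀ (a b : R) (x y : M), f (a • x + b • y) = a • f x + b • f y) :
    ⇑(LinearMap.ofMapSMulAdd f hf) = f :=
  rfl

section MarkovOperator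

variable {Ω : Type*} [MeasurableSpace Ω]

def IsMarkov (P : Measure Ω → Measure Ω) : Prop :=
  ∀ μ, IsProbabilityMeasure μ → IsProbabilityMeasure (P μ)

def SatisfiesDoeblin (P : Measure Ω → Measure Ω) (α : ℝ) (η : Measure Ω) : Prop :=
  ∀ μ, IsProbabilityMeasure μ → ENNReal.ofReal α • η ≤ P μ

theorem MeasureTheory.Measure.measure_univ_smul_inv_smul (m : Measure Ω) [IsFiniteMeasure m] :
    m .univ • (m .univ)⁻¹ • m = m := by
  rcases eq_or_ne m 0 with rfl | hm
  · simp
  · rw [smul_smul, ENNReal.mul_inv_cancel (by simpa using hm) (measure_ne_top _ _), one_smul]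

theorem MeasureTheory.Measure.linearMap_mono (P : Measure Ω →ₗ[ℝ≥0∞] Measure Ω) {μ ν : Measure Ω}
    [IsFiniteMeasure μ] (h : μ ≤ ν) : P μ ≤ P ν := by
  rw [← Measure.sub_add_cancel_of_le h, map_add]
  exact Measure.le_add_left le_rfl

-- `P` need not be countably additive, so only this inequality is available.
theorem MeasureTheory.Measure.sum_linearMap_le (P : Measure Ω →ₗ[ℝ≥0∞] Measure Ω)
    (m : ℕ → Measure Ω) [IsFiniteMeasure (Measure.sum m)] :
    Measure.sum (fun n => P (m n)) ≤ P (Measure.sum m) := by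
  refine Measure.le_iff.mpr fun E hE => ?_
  rw [Measure.sum_apply _ hE, ENNReal.tsum_eq_iSup_nat]
  refine iSup_le fun N => ?_
  have hpartial : ∑ n ∈ Finset.range N, m n ≤ Measure.sum m := by
    refine Measure.le_iff.mpr fun F hF => ?_
    rw [Measure.finsetSum_apply, Measure.sum_apply _ hF]
    exact ENNReal.sum_le_tsum _
  have := isFiniteMeasure_of_le _ hpartial
  have hle := Measure.linearMap_mono P hpartial E
  rwa [_root_.map_sum, Measure.finsetSum_apply] at hle

namespace IsMarkov

variable {P : Measure Ω →ₗ[ℝ≥0∞] Measure Ω} (hP : IsMarkov P)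
include hP

theorem measure_univ_apply (m : Measure Ω) [IsFiniteMeasure m] : P m .univ = m .univ := by
  rcases eq_or_ne m 0 with rfl | hm
  · simp
  have : NeZero m := ⟨hm⟩
  have := hP _ (isProbabilityMeasureSMul (μ := m))
  calc P m .univ = P (m .univ • (m .univ)⁻¹ • m) .univ := by rw [m.measure_univ_smul_inv_smul]
    _ = m .univ := by rw [map_smul, Measure.smul_apply, this.measure_univ, smul_eq_mul, mul_one]

theorem isFiniteMeasure_apply (m : Measure Ω) [IsFiniteMeasure m] : IsFiniteMeasure (P m) :=
  ⟨by rw [hP.measure_univ_apply]; exact measure_lt_top _ _⟩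

theorem tvDist_apply_le (μ ν : Measure Ω) [IsProbabilityMeasure μ] [IsProbabilityMeasure ν] :
    tvDist (P μ) (P ν) ≤ tvDist μ ν := by
  have := hP μ ‹_›
  have := hP ν ‹_›
  have := hP.isFiniteMeasure_apply (μ - ν)
  have := hP.isFiniteMeasure_apply (ν - μ)
  have h := congrArg P (Measure.add_sub_eq_add_sub_swap μ ν)
  rw [map_add, map_add] at h
  calc tvDist (P μ) (P ν) ≤ (P (μ - ν)).real .univ := tvDist_le_of_add_eq_add h
    _ = tvDist μ ν := by rw [tvDist_eq_measureReal_sub, measureReal_def, hP.measure_univ_apply]; rfl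

end IsMarkov

end MarkovOperator

section Doeblin

variable {Ω : Type*} [MeasurableSpace Ω] {α : ℝ} {η : Measure Ω}

noncomputable def doeblinResidual (P : Measure Ω → Measure Ω) (α : ℝ) (η μ : Measure Ω) :
    Measure Ω :=
  (ENNReal.ofReal (1 - α))⁻¹ • (P μ - ENNReal.ofReal α • η)

namespace SatisfiesDoeblin

theorem smul_le_apply {P : Measure Ω →ₗ[ℝ≥0∞] Measure Ω} (hD : SatisfiesDoeblin P α η)
    (m : Measure Ω) [IsFiniteMeasure m] : (ENNReal.ofReal α * m .univ) • η ≤ P m := by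
  rcases eq_or_ne m 0 with rfl | hm
  · simp
  have : NeZero m := ⟨hm⟩
  calc (ENNReal.ofReal α * m .univ) • η = m .univ • ENNReal.ofReal α • η := by
        rw [smul_smul, mul_comm]
    _ ≤ m .univ • P ((m .univ)⁻¹ • m) := by gcongr; exact hD _ isProbabilityMeasureSMul
    _ = P m := by rw [← map_smul, m.measure_univ_smul_inv_smul]

theorem tvDist_apply_le {P : Measure Ω →ₗ[ℝ≥0∞] Measure Ω} (hP : IsMarkov P)
    (hD : SatisfiesDoeblin P α η) (hα : 0 ≤ α) [IsProbabilityMeasure η]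
    (μ ν : Measure Ω) [IsProbabilityMeasure μ] [IsProbabilityMeasure ν] :
    tvDist (P μ) (P ν) ≤ (1 - α) * tvDist μ ν := by
  have := hP μ ‹_›
  have := hP ν ‹_›
  have := hP.isFiniteMeasure_apply (μ - ν)
  have := hP.isFiniteMeasure_apply (ν - μ)
  set c := (μ - ν) .univ
  set β := ENNReal.ofReal α * c
  have hp : β • η ≤ P (μ - ν) := hD.smul_le_apply _
  have hq : β • η ≤ P (ν - μ) := by
    simpa only [Measure.sub_apply_univ_comm μ ν] using hD.smul_le_apply (ν - μ)
  have := isFiniteMeasure_of_le _ hp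
  have hβc : β ≤ c := by
    simpa [hP.measure_univ_apply] using hp .univ
  -- the common minorant `β • η` of `P (μ - ν)` and `P (ν - μ)` cancels
  have hsum : P μ + (P (ν - μ) - β • η) = P ν + (P (μ - ν) - β • η) := by
    have h := congrArg P (Measure.add_sub_eq_add_sub_swap μ ν)
    rw [map_add, map_add, ← Measure.sub_add_cancel_of_le hp, ← Measure.sub_add_cancel_of_le hq,
      ← add_assoc, ← add_assoc] at h
    ext E hE
    exact (ENNReal.add_left_inj (measure_ne_top (β • η) E)).mp (by simpa using congr($h E))
  calc tvDist (P μ) (P ν) ≤ (P (μ - ν) - β • η).real .univ := tvDist_le_of_add_eq_add hsum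
    _ = (1 - α) * tvDist μ ν := by
      rw [tvDist_eq_measureReal_sub, measureReal_def, measureReal_def,
        Measure.sub_apply .univ hp, hP.measure_univ_apply, Measure.smul_apply,
        measure_univ (μ := η), smul_eq_mul, mul_one,
        ENNReal.toReal_sub_of_le hβc (measure_ne_top _ _), ENNReal.toReal_mul,
        ENNReal.toReal_ofReal hα]
      ring

theorem eq_of_apply_eq_self {P : Measure Ω →ₗ[ℝ≥0∞] Measure Ω} (hP : IsMarkov P)
    (hD : SatisfiesDoeblin P α η) (hα : 0 < α) [IsProbabilityMeasure η]
    {μ ν : Measure Ω} [IsProbabilityMeasure μ] [IsProbabilityMeasure ν]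
    (hμ : P μ = μ) (hν : P ν = ν) : μ = ν := by
  have h := hD.tvDist_apply_le hP hα.le μ ν
  rw [hμ, hν] at h
  exact eq_of_tvDist_eq_zero (by nlinarith [tvDist_nonneg μ ν])

theorem apply_eq_add_doeblinResidual {P : Measure Ω → Measure Ω} (hP : IsMarkov P)
    (hD : SatisfiesDoeblin P α η) (hα : α < 1) (μ : Measure Ω) [IsProbabilityMeasure μ] :
    P μ = ENNReal.ofReal α • η + ENNReal.ofReal (1 - α) • doeblinResidual P α η μ := by
  have := hP μ ‹_›
  have := isFiniteMeasure_of_le _ (hD μ ‹_›)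
  rw [doeblinResidual, smul_smul, ENNReal.mul_inv_cancel (by simpa using hα) ENNReal.ofReal_ne_top,
    one_smul, add_comm, Measure.sub_add_cancel_of_le (hD μ ‹_›)]

theorem isProbabilityMeasure_doeblinResidual {P : Measure Ω → Measure Ω} (hP : IsMarkov P)
    (hD : SatisfiesDoeblin P α η) (hα₀ : 0 ≤ α) (hα₁ : α < 1) [IsProbabilityMeasure η]
    (μ : Measure Ω) [IsProbabilityMeasure μ] : IsProbabilityMeasure (doeblinResidual P α η μ) := by
  have := hP μ ‹_›
  have := isFiniteMeasure_of_le _ (hD μ ‹_›)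
  constructor
  rw [doeblinResidual, Measure.smul_apply, Measure.sub_apply .univ (hD μ ‹_›), Measure.smul_apply,
    measure_univ, measure_univ, smul_eq_mul, smul_eq_mul, mul_one, ← ENNReal.ofReal_one,
    ← ENNReal.ofReal_sub _ hα₀, ENNReal.inv_mul_cancel (by simpa using hα₁) ENNReal.ofReal_ne_top,
    ENNReal.ofReal_one]

theorem exists_apply_eq_self {P : Measure Ω →ₗ[ℝ≥0∞] Measure Ω} (hP : IsMarkov P)
    (hD : SatisfiesDoeblin P α η) (hα : α ∈ Set.Ioo 0 1) [IsProbabilityMeasure η] :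
    ∃ μ, IsProbabilityMeasure μ ∧ P μ = μ := by
  set ρ : ℕ → Measure Ω := fun n => (doeblinResidual P α η)^[n] η with hρ
  have hρ_prob (n : ℕ) : IsProbabilityMeasure (ρ n) := by
    induction n with
    | zero => assumption
    | succ n ih =>
      simp only [hρ, Function.iterate_succ_apply']
      exact hD.isProbabilityMeasure_doeblinResidual hP hα.1.le hα.2 _
  set c : ℕ → ℝ≥0∞ := fun n => ENNReal.ofReal α * ENNReal.ofReal (1 - α) ^ n with hc
  have hc_sum : ∑' n, c n = 1 := by
    rw [ENNReal.tsum_mul_left, ENNReal.tsum_geometric, ← ENNReal.ofReal_one,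
      ← ENNReal.ofReal_sub _ (by linarith [hα.2] : (0 : ℝ) ≤ 1 - α), sub_sub_cancel,
      ENNReal.mul_inv_cancel (by simpa using hα.1) ENNReal.ofReal_ne_top, ENNReal.ofReal_one]
  set μ := Measure.sum fun n => c n • ρ n
  have hμ : IsProbabilityMeasure μ := ⟨by simp [μ, Measure.sum_apply _ .univ, hc_sum]⟩
  have hPμ : Measure.sum (fun n => P (c n • ρ n)) = μ := by
    ext E hE
    have hstep (n : ℕ) :
        P (c n • ρ n) E = c n * ENNReal.ofReal α * η E + c (n + 1) * ρ (n + 1) E := by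
      rw [map_smul, hD.apply_eq_add_doeblinResidual hP hα.2]
      simp only [hρ, hc, Function.iterate_succ_apply', Measure.smul_apply, Measure.add_apply,
        smul_eq_mul]
      ring
    rw [Measure.sum_apply _ hE, Measure.sum_apply _ hE, tsum_congr hstep, ENNReal.tsum_add,
      ENNReal.tsum_mul_right, ENNReal.tsum_mul_right, hc_sum, one_mul,
      tsum_eq_zero_add' (f := fun n => (c n • ρ n) E) ENNReal.summable]
    simp [hρ, hc]
  have := hP μ hμ
  have hle : μ ≤ P μ := hPμ.symm.trans_le (Measure.sum_linearMap_le P _)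
  exact ⟨μ, hμ, (Measure.eq_of_le_of_isProbabilityMeasure hle).symm⟩

end SatisfiesDoeblin

end Doeblin

theorem pow_floor_div_le_inv_mul_exp {κ : ℝ} (hκ₀ : 0 < κ) (hκ₁ : κ ≤ 1) (τ t : ℝ) :
    κ ^ ⌊t / τ⌋₊ ≤ κ⁻¹ * exp (log κ / τ * t) := by
  have hfloor : t / τ - 1 ≤ ⌊t / τ⌋₊ := by linarith [Nat.lt_floor_add_one (t / τ)]
  calc κ ^ ⌊t / τ⌋₊ = exp (⌊t / τ⌋₊ * log κ) := by rw [exp_nat_mul, exp_log hκ₀]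
    _ ≤ exp ((t / τ - 1) * log κ) :=
      exp_le_exp.mpr (mul_le_mul_of_nonpos_right hfloor (log_nonpos hκ₀.le hκ₁))
    _ = κ⁻¹ * exp (log κ / τ * t) := by
      rw [sub_mul, one_mul, exp_sub, exp_log hκ₀, div_mul_eq_mul_div, div_mul_eq_mul_div,
        mul_comm t]
      field_simp

section Semigroup

variable {Ω : Type*} [MeasurableSpace Ω] {S : ℝ → Measure Ω → Measure Ω}

theorem tvDist_semigroup_le_pow
    (hSsem : ∀ s t : ℝ, 0 ≤ s → 0 ≤ t → ∀ μ, S (s + t) μ = S s (S t μ))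
    (hSlin : ∀ t : ℝ, 0 ≤ t → ∀ (a b : ℝ≥0∞) (μ ν : Measure Ω),
      S t (a • μ + b • ν) = a • S t μ + b • S t ν)
    (hMarkov : ∀ t : ℝ, 0 ≤ t → IsMarkov (S t))
    {α τ : ℝ} {η : Measure Ω} [IsProbabilityMeasure η] (hα₀ : 0 ≤ α) (hα₁ : α ≤ 1) (hτ : 0 ≤ τ)
    (hD : SatisfiesDoeblin (S τ) α η) (n : ℕ) {s : ℝ} (hs : 0 ≤ s)
    (μ ν : Measure Ω) [IsProbabilityMeasure μ] [IsProbabilityMeasure ν] :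
    tvDist (S (n * τ + s) μ) (S (n * τ + s) ν) ≤ (1 - α) ^ n * tvDist μ ν := by
  induction n with
  | zero =>
    simpa using (hMarkov s hs).tvDist_apply_le (P := .ofMapSMulAdd (S s) (hSlin s hs)) μ ν
  | succ n ih =>
    have hnτs : 0 ≤ n * τ + s := by positivity
    have := hMarkov _ hnτs μ ‹_›
    have := hMarkov _ hnτs ν ‹_›
    have hsplit : ((n + 1 : ℕ) : ℝ) * τ + s = τ + (n * τ + s) := by push_cast; ring
    rw [hsplit, hSsem _ _ hτ hnτs, hSsem _ _ hτ hnτs, pow_succ', mul_assoc]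
    calc _ ≤ (1 - α) * tvDist (S (n * τ + s) μ) (S (n * τ + s) ν) :=
          hD.tvDist_apply_le (P := .ofMapSMulAdd (S τ) (hSlin τ hτ)) (hMarkov τ hτ) hα₀ _ _
      _ ≤ _ := by gcongr

end Semigroup

theorem doeblin_theorem_general
    {Ω : Type*} [MeasurableSpace Ω]
    (S : ℝ → Measure Ω → Measure Ω)
    (hSsem : ∀ s t : ℝ, 0 ≤ s → 0 ≤ t → ∀ μ, S (s + t) μ = S s (S t μ))
    (hSlin : ∀ t : ℝ, 0 ≤ t → ∀ (a b : ℝ≥0∞) (μ ν : Measure Ω),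
      S t (a • μ + b • ν) = a • S t μ + b • S t ν)
    (hMarkov : ∀ t : ℝ, 0 ≤ t → ∀ μ : Measure Ω,
      IsProbabilityMeasure μ → IsProbabilityMeasure (S t μ))
    (α : ℝ) (hα : α ∈ Set.Ioo (0:ℝ) 1)
    (η : Measure Ω) [IsProbabilityMeasure η]
    (τ : ℝ) (hτ : 0 < τ)
    (hDoeblin : ∀ μ : Measure Ω, IsProbabilityMeasure μ →
      ENNReal.ofReal α • η ≤ S τ μ) :
    ∃ μlim : Measure Ω,
      (IsProbabilityMeasure μlim ∧ ∀ t : ℝ, 0 ≤ t → S t μlim = μlim) ∧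
      (∀ ν : Measure Ω, IsProbabilityMeasure ν → (∀ t : ℝ, 0 ≤ t → S t ν = ν) → ν = μlim) ∧
      (∀ μ : Measure Ω, IsProbabilityMeasure μ → ∀ t : ℝ, 0 ≤ t →
        tvDist (S t μ) μlim ≤
          (1 / (1 - α)) * Real.exp (-(-Real.log (1 - α) / τ) * t) * tvDist μ μlim) := by
  set P := LinearMap.ofMapSMulAdd (S τ) (hSlin τ hτ.le)
  have hP : IsMarkov P := hMarkov τ hτ.le
  have hD : SatisfiesDoeblin P α η := hDoeblin
  obtain ⟨μlim, hprob, hfix⟩ := hD.exists_apply_eq_self hP hα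
  have huniq (ν : Measure Ω) (hν : IsProbabilityMeasure ν) (hνfix : S τ ν = ν) : ν = μlim :=
    hD.eq_of_apply_eq_self hP hα.1 hνfix hfix
  have hinv (t : ℝ) (ht : 0 ≤ t) : S t μlim = μlim :=
    huniq _ (hMarkov t ht μlim hprob) (by rw [← hSsem _ _ hτ.le ht, add_comm, hSsem _ _ ht hτ.le,
      show S τ μlim = μlim from hfix])
  refine ⟨μlim, ⟨hprob, hinv⟩, fun ν hν hνinv => huniq ν hν (hνinv τ hτ.le), fun μ hμ t ht => ?_⟩
  set n := ⌊t / τ⌋₊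
  have hnτ : n * τ ≤ t := (le_div_iff₀ hτ).mp (Nat.floor_le (div_nonneg ht hτ.le))
  have ht_eq : t = n * τ + (t - n * τ) := by ring
  calc tvDist (S t μ) μlim = tvDist (S t μ) (S t μlim) := by rw [hinv t ht]
    _ ≤ (1 - α) ^ n * tvDist μ μlim := by
      rw [ht_eq]
      exact tvDist_semigroup_le_pow hSsem hSlin hMarkov hα.1.le hα.2.le hτ.le hDoeblin n
        (sub_nonneg.mpr hnτ) μ μlim
    _ ≤ _ := by
      gcongr
      · exact tvDist_nonneg μ μlim
      · simpa [neg_div] using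
          pow_floor_div_le_inv_mul_exp (sub_pos.mpr hα.2) (by linarith [hα.1]) τ t

/-- **Doeblin's theorem.** If a Markov semigroup satisfies `S τ μ ≥ α η`
for all probability measures `μ`, then it has a unique invariant probability measure
`μlim` and converges exponentially to it in total variation, with
`C = 1/(1−α)` and `λ = −log(1−α)/τ`. -/
theorem doeblin_theorem
    {Ω : Type*} [MeasurableSpace Ω]
    (S : ℝ → Measure Ω → Measure Ω)
    (hS0 : ∀ μ, S 0 μ = μ)
    (hSsem : ∀ s t : ℝ, 0 ≤ s → 0 ≤ t → ∀ μ, S (s + t) μ = S s (S t μ))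
    (hSlin : ∀ t : ℝ, 0 ≤ t → ∀ (a b : ℝ≥0∞) (μ ν : Measure Ω),
      S t (a • μ + b • ν) = a • S t μ + b • S t ν)
    (hMarkov : ∀ t : ℝ, 0 ≤ t → ∀ μ : Measure Ω,
      IsProbabilityMeasure μ → IsProbabilityMeasure (S t μ))
    (α : ℝ) (hα : α ∈ Set.Ioo (0:ℝ) 1)
    (η : Measure Ω) [IsProbabilityMeasure η]
    (τ : ℝ) (hτ : 0 < τ)
    (hDoeblin : ∀ μ : Measure Ω, IsProbabilityMeasure μ →
      ENNReal.ofReal α • η ≤ S τ μ) :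
    ∃ μlim : Measure Ω,
      (IsProbabilityMeasure μlim ∧ ∀ t : ℝ, 0 ≤ t → S t μlim = μlim) ∧
      (∀ ν : Measure Ω, IsProbabilityMeasure ν → (∀ t : ℝ, 0 ≤ t → S t ν = ν) → ν = μlim) ∧
      (∀ μ : Measure Ω, IsProbabilityMeasure μ → ∀ t : ℝ, 0 ≤ t →
        tvDist (S t μ) μlim ≤
          (1 / (1 - α)) * Real.exp (-(-Real.log (1 - α) / τ) * t) * tvDist μ μlim) :=
  doeblin_theorem_general S hSsem hSlin hMarkov α hα η τ hτ hDoeblin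
end

section
/- For the free transport flow on the torus 𝕋^d: given any time τ > 0 and any x₀ ∈ 𝕋^d, there exist β, R̃ > 0 such that for all t ≥ τ, ∫_{B(0,R̃)} T_t(δ_{x₀}(x) 𝟙_{B(0,β)}(v)) dv ≥ τ^{−d}, i.e. the free transport of a Dirac in position with uniformly bounded velocities spreads a positive density over all of 𝕋^d. -/
/-!
Velocities in the cube `(0, n/t]^d` with `n = ⌈t/τ⌉` lie in a fixed ball, since `n/t ≤ 2/τ`.
At time `t` each coordinate `t v_i` of such a velocity sweeps `(0, n]`, which wraps `n` times
around the circle, so the cube is pushed forward to `(n/t)^d` times the Haar measure of the torus,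
and `n/t ≥ τ⁻¹`. Velocities are conserved, so restricting to a velocity ball commutes with
the flow.
-/

open MeasureTheory Real Set
open scoped ENNReal

namespace AddCircle

variable {T : ℝ} [Fact (0 < T)]

theorem map_coe_volume_restrict_Ioc_natCast_mul (n : ℕ) :
    Measure.map ((↑) : ℝ → AddCircle T) (volume.restrict (Ioc 0 (n * T))) =
      (n : ℝ≥0∞) • volume := by
  have hmk : Measurable ((↑) : ℝ → AddCircle T) := (AddCircle.measurePreserving_mk T 0).measurable
  induction n with
  | zero => simp
  | succ m ih =>
    have hT : 0 < T := Fact.out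
    rw [Nat.cast_succ, add_mul, one_mul,
      ← Ioc_union_Ioc_eq_Ioc (by positivity : (0 : ℝ) ≤ m * T) (by linarith),
      Measure.restrict_union (Ioc_disjoint_Ioc_of_le le_rfl) measurableSet_Ioc,
      Measure.map_add _ _ hmk, ih, (AddCircle.measurePreserving_mk T _).map_eq, Nat.cast_succ,
      add_smul, one_smul]

theorem measurePreserving_coe_mul {t : ℝ} (ht : 0 < t) (n : ℕ) :
    MeasurePreserving (fun x : ℝ => ((t * x : ℝ) : AddCircle T))
      (volume.restrict (Ioc 0 (n * T / t))) (ENNReal.ofReal (n / t) • volume) := by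
  have hmk : Measurable ((↑) : ℝ → AddCircle T) := (AddCircle.measurePreserving_mk T 0).measurable
  refine ⟨hmk.comp (measurable_const_mul t), ?_⟩
  have hpre : (t * ·) ⁻¹' Ioc 0 (n * T) = Ioc 0 (n * T / t) := by
    ext x
    simp only [mem_preimage, mem_Ioc, le_div_iff₀ ht]
    constructor <;> rintro ⟨h1, h2⟩ <;> refine ⟨?_, by linarith⟩
    · exact pos_of_mul_pos_right h1 ht.le
    · positivity
  have hscale : Measure.map (t * ·) (volume.restrict (Ioc 0 (n * T / t))) =
      ENNReal.ofReal t⁻¹ • volume.restrict (Ioc 0 (n * T)) := by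
    rw [← hpre, ← Measure.restrict_map (measurable_const_mul t) measurableSet_Ioc,
      Real.map_volume_mul_left ht.ne', abs_of_pos (inv_pos.mpr ht), Measure.restrict_smul]
  rw [← Function.comp_def, ← Measure.map_map hmk (measurable_const_mul t), hscale,
    Measure.map_smul, map_coe_volume_restrict_Ioc_natCast_mul, smul_smul,
    ← ENNReal.ofReal_natCast, ← ENNReal.ofReal_mul (by positivity), inv_mul_eq_div]

end AddCircle

theorem MeasureTheory.Measure.pi_const_smul {ι α : Type*} [Fintype ι] [MeasurableSpace α]
    (μ : Measure α) [SigmaFinite μ] (c : ℝ≥0∞) [SigmaFinite (c • μ)] :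
    Measure.pi (fun _ : ι => c • μ) = c ^ Fintype.card ι • Measure.pi fun _ : ι => μ := by
  refine Measure.pi_eq fun s hs => ?_
  simp only [Measure.smul_apply, smul_eq_mul, Measure.pi_pi, Finset.prod_mul_distrib,
    Finset.prod_const, Finset.card_univ]

theorem Nat.ceil_div_div_mem_Icc {τ t : ℝ} (hτ : 0 < τ) (ht : τ ≤ t) :
    (⌈t / τ⌉₊ : ℝ) / t ∈ Icc τ⁻¹ (2 / τ) := by
  have ht0 : 0 < t := hτ.trans_le ht
  constructor
  · rw [le_div_iff₀ ht0, ← div_eq_inv_mul]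
    exact Nat.le_ceil _
  · rw [div_le_div_iff₀ ht0 hτ]
    have hceil : (⌈t / τ⌉₊ : ℝ) < t / τ + 1 := Nat.ceil_lt_add_one (by positivity)
    nlinarith [div_mul_cancel₀ t hτ.ne']

theorem EuclideanSpace.norm_le_sqrt_card_mul {ι : Type*} [Fintype ι] {r : ℝ} (hr : 0 ≤ r)
    (v : EuclideanSpace ℝ ι) (hv : ∀ i, |v i| ≤ r) : ‖v‖ ≤ √(Fintype.card ι) * r := by
  rw [EuclideanSpace.norm_eq, ← Real.sqrt_sq hr, ← Real.sqrt_mul (Nat.cast_nonneg _)]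
  refine Real.sqrt_le_sqrt ?_
  calc ∑ i, ‖v i‖ ^ 2 ≤ ∑ _i : ι, r ^ 2 := Finset.sum_le_sum fun i _ =>
        pow_le_pow_left₀ (norm_nonneg _) (hv i) 2
    _ = _ := by simp

theorem MeasureTheory.Measure.map_fst_restrict_map_shear_dirac_prod {G V : Type*}
    [MeasurableSpace G] [Add G] [MeasurableAdd₂ G] [MeasurableSpace V] {g : V → G}
    (hg : Measurable g) (x₀ : G) (ν : Measure V) [SFinite ν] {B : Set V} (hB : MeasurableSet B) :
    Measure.map Prod.fst
        ((Measure.map (fun p : G × V => (p.1 + g p.2, p.2)) ((Measure.dirac x₀).prod ν)).restrict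
          (univ ×ˢ B)) =
      Measure.map (fun v => x₀ + g v) (ν.restrict B) := by
  have hshear : Measurable fun p : G × V => (p.1 + g p.2, p.2) :=
    (measurable_fst.add (hg.comp measurable_snd)).prodMk measurable_snd
  have hpre : (fun p : G × V => (p.1 + g p.2, p.2)) ⁻¹' (univ ×ˢ B) = univ ×ˢ B := by
    ext p; simp
  rw [Measure.restrict_map hshear (MeasurableSet.univ.prod hB), hpre, ← Measure.prod_restrict,
    Measure.restrict_univ, Measure.dirac_prod, Measure.map_map hshear measurable_prodMk_left,
    Measure.map_map measurable_fst (hshear.comp measurable_prodMk_left)]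
  rfl

section Torus

variable {ι : Type*} [Fintype ι] {T : ℝ} [Fact (0 < T)]

theorem measurePreserving_pi_coe_mul {t : ℝ} (ht : 0 < t) (n : ℕ) :
    MeasurePreserving (fun (v : ι → ℝ) i => ((t * v i : ℝ) : AddCircle T))
      (volume.restrict (univ.pi fun _ => Ioc 0 (n * T / t)))
      (ENNReal.ofReal (n / t) ^ Fintype.card ι • volume) := by
  have := Measure.smul_finite (volume : Measure (AddCircle T)) (ENNReal.ofReal_ne_top (r := n / t))
  rw [volume_pi, Measure.restrict_pi_pi, volume_pi, ← Measure.pi_const_smul]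
  exact measurePreserving_pi _ _ fun _ => AddCircle.measurePreserving_coe_mul ht n

theorem EuclideanSpace.measurePreserving_coe_mul {t : ℝ} (ht : 0 < t) (n : ℕ) :
    MeasurePreserving (fun (v : EuclideanSpace ℝ ι) i => ((t * v i : ℝ) : AddCircle T))
      (volume.restrict {v | ∀ i, v i ∈ Ioc 0 (n * T / t)})
      (ENNReal.ofReal (n / t) ^ Fintype.card ι • volume) := by
  have hcube : {v : EuclideanSpace ℝ ι | ∀ i, v i ∈ Ioc 0 (n * T / t)} =
      WithLp.ofLp ⁻¹' univ.pi fun _ => Ioc 0 (n * T / t) := by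
    ext v; simp
  rw [hcube]
  exact (measurePreserving_pi_coe_mul ht n).comp
    ((PiLp.volume_preserving_ofLp ι).restrict_preimage (.univ_pi fun _ => measurableSet_Ioc))

end Torus

theorem torus_transport_spreading_general
    {d : ℕ} (τ : ℝ) (hτ : 0 < τ)
    (x₀ : Fin d → AddCircle (1 : ℝ)) :
    ∃ β : ℝ, 0 < β ∧ ∃ Rt : ℝ, 0 < Rt ∧
      ∀ t : ℝ, τ ≤ t →
        (ENNReal.ofReal (τ ^ (-(d : ℝ))))
            • (volume : Measure (Fin d → AddCircle (1 : ℝ)))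
          ≤ Measure.map Prod.fst
              ((Measure.map
                  (fun p : (Fin d → AddCircle (1 : ℝ)) × EuclideanSpace ℝ (Fin d) =>
                    (p.1 + fun i => ((t * p.2 i : ℝ) : AddCircle (1 : ℝ)), p.2))
                  ((Measure.dirac x₀).prod
                    ((volume : Measure (EuclideanSpace ℝ (Fin d))).restrict
                      (Metric.ball 0 β)))).restrict
                ((Set.univ : Set (Fin d → AddCircle (1 : ℝ))) ×ˢ Metric.ball 0 Rt)) := by
  set β := 2 * √d / τ + 1
  have hβ : 0 < β := by positivity
  refine ⟨β, hβ, β, hβ, fun t hτt => ?_⟩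
  have ht : 0 < t := hτ.trans_le hτt
  set n := ⌈t / τ⌉₊
  obtain ⟨hτa, ha2τ⟩ := Nat.ceil_div_div_mem_Icc hτ hτt
  set cube : Set (EuclideanSpace ℝ (Fin d)) := {v | ∀ i, v i ∈ Ioc 0 (n * 1 / t)}
  have hcube : cube ⊆ Metric.ball 0 β := fun v hv => by
    have hnorm := EuclideanSpace.norm_le_sqrt_card_mul (r := 2 / τ) (by positivity) v fun i => by
      rw [abs_of_pos (hv i).1]
      exact (mul_one (n : ℝ) ▸ (hv i).2).trans ha2τ
    rw [Fintype.card_fin] at hnorm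
    rw [mem_ball_zero_iff]
    linarith [show √d * (2 / τ) = 2 * √d / τ by ring]
  have hflow := EuclideanSpace.measurePreserving_coe_mul (ι := Fin d) (T := 1) ht n
  have hcoef : ENNReal.ofReal (τ ^ (-(d : ℝ))) ≤ ENNReal.ofReal (n / t) ^ d := by
    rw [Real.rpow_neg hτ.le, Real.rpow_natCast, ← inv_pow, ENNReal.ofReal_pow (by positivity)]
    gcongr
  rw [Measure.map_fst_restrict_map_shear_dirac_prod hflow.measurable x₀ _ measurableSet_ball,
    Measure.restrict_restrict measurableSet_ball, inter_self]
  calc ENNReal.ofReal (τ ^ (-(d : ℝ))) • volume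
      ≤ ENNReal.ofReal (n / t) ^ d • (volume : Measure (Fin d → AddCircle (1 : ℝ))) := by
        gcongr
    _ = Measure.map ((x₀ + ·) ∘ fun v i => ((t * v i : ℝ) : AddCircle (1 : ℝ)))
          (volume.restrict cube) := by
        rw [← Measure.map_map (measurable_const_add x₀) hflow.measurable, hflow.map_eq,
          Fintype.card_fin, Measure.map_smul, map_add_left_eq_self]
    _ ≤ _ := Measure.map_mono (Measure.restrict_mono hcube le_rfl)
        (hflow.measurable.const_add x₀)

/-- On the torus `𝕋^d = (ℝ/ℤ)^d`, given any `τ > 0` and any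
`x₀ ∈ 𝕋^d`, there exist `β, R̃ > 0` such that for all `t ≥ τ`, the position marginal of
the free transport at time `t` of the measure `δ_{x₀}(dx) 𝟙_{B(0,β)}(v) dv`, restricted to
velocities in `B(0,R̃)`, has density at least `τ^{−d}` with respect to the (unit-mass)
Lebesgue measure on `𝕋^d`. -/
theorem torus_transport_spreading
    {d : ℕ} (hd : 0 < d) (τ : ℝ) (hτ : 0 < τ)
    (x₀ : Fin d → AddCircle (1 : ℝ)) :
    ∃ β : ℝ, 0 < β ∧ ∃ Rt : ℝ, 0 < Rt ∧
      ∀ t : ℝ, τ ≤ t →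
        (ENNReal.ofReal (τ ^ (-(d : ℝ))))
            • (volume : Measure (Fin d → AddCircle (1 : ℝ)))
          ≤ Measure.map Prod.fst
              ((Measure.map
                  (fun p : (Fin d → AddCircle (1 : ℝ)) × EuclideanSpace ℝ (Fin d) =>
                    (p.1 + fun i => ((t * p.2 i : ℝ) : AddCircle (1 : ℝ)), p.2))
                  ((Measure.dirac x₀).prod
                    ((volume : Measure (EuclideanSpace ℝ (Fin d))).restrict
                      (Metric.ball 0 β)))).restrict
                ((Set.univ : Set (Fin d → AddCircle (1 : ℝ))) ×ˢ Metric.ball 0 Rt)) :=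
  torus_transport_spreading_general τ hτ x₀
end
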